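/- arXiv:1912.00267 — 2 statements merged into one kernel-verified Lean document; each statement's English description precedes it below -/
import Mathlib

section
/- Assume (|v|²/2 + V(|v|))/|v| → +∞ as |v| → ∞ and let M_u(v) = Z(σ,u)^{-1} exp(−Φ_u(v)/σ). For any u ∈ ℝ^d, the vector ∫_{ℝ^d} v M_u(v) dv lies in ℝ₊·u, i.e. it equals a nonnegative scalar times u; moreover when u ≠ 0 the scalar ∫ M_u(v)(v·u) dv is strictly positive. -/
/-!
Since `Φ_u(v) = |v|²/2 + |u|²/2 + V(|v|) - ⟪v, u⟫`, the density `M_u` is a radial factor times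
`exp(⟪v, u⟫/σ)`. It is invariant under the reflection in the line `ℝ u`, which therefore fixes the
mean velocity; the fixed points of that reflection are exactly `ℝ u`. Pairing `v` with its mirror
image in `u^⊥`, which flips the sign of `t = ⟪v, u⟫`, turns `∫ M_u(v) ⟪v, u⟫` into half the integral
of `t (e^{t/σ} - e^{-t/σ})` against a positive radial weight, and this integrand is positive off
the hyperplane `u^⊥`. Coercivity of `V` makes `exp(-Φ_u/σ)` decay faster than `exp(-(d+2)|v|)`,
so the first moment is finite.
-/

open MeasureTheory Real Filter
open scoped RealInnerProductSpace

lemma mul_exp_neg_le_one_add_rpow {r : ℝ} (hr : 0 ≤ r) (n : ℕ) :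
    r * exp (-((n + 2) * r)) ≤ (1 + r) ^ (-((n : ℝ) + 1)) := by
  have hpow : (1 + r) ^ (n + 1) ≤ exp ((n + 1) * r) := by
    rw [show ((n : ℝ) + 1) * r = ((n + 1 : ℕ) : ℝ) * r by push_cast; ring, exp_nat_mul]
    exact pow_le_pow_left₀ (by linarith) (by linarith [add_one_le_exp r]) _
  have hprod : r * (1 + r) ^ (n + 1) ≤ exp ((n + 2) * r) := by
    calc r * (1 + r) ^ (n + 1) ≤ exp r * exp ((n + 1) * r) :=
          mul_le_mul (by linarith [add_one_le_exp r]) hpow (by positivity) (exp_pos _).le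
      _ = exp ((n + 2) * r) := by rw [← exp_add]; ring_nf
  rw [rpow_neg (by positivity), ← Nat.cast_add_one, rpow_natCast, exp_neg,
    ← div_eq_mul_inv, div_le_iff₀ (exp_pos _), inv_mul_eq_div, le_div_iff₀ (by positivity)]
  linarith

lemma StrictMono.sub_neg_mul_pos {g : ℝ → ℝ} (hg : StrictMono g) {t : ℝ} (ht : t ≠ 0) :
    0 < (g t - g (-t)) * t := by
  rcases ht.lt_or_gt with hneg | hpos
  · exact mul_pos_of_neg_of_neg (by linarith [hg (show t < -t by linarith)]) hneg
  · exact mul_pos (by linarith [hg (show -t < t by linarith)]) hpos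

section Symmetry

variable {E : Type*} [NormedAddCommGroup E] [InnerProductSpace ℝ E] [FiniteDimensional ℝ E]
  [MeasurableSpace E] [BorelSpace E]

open Module in
theorem integrable_smul_self_of_le_exp {φ : E → ℝ} (hφ : Integrable φ) {R : ℝ}
    (hdecay : ∀ v : E, R ≤ ‖v‖ → ‖φ v‖ ≤ exp (-((finrank ℝ E + 2) * ‖v‖))) :
    Integrable (fun v => φ v • v) := by
  have hdom : ∀ v : E, ‖φ v • v‖ ≤ max R 0 * ‖φ v‖ + (1 + ‖v‖) ^ (-((finrank ℝ E : ℝ) + 1)) := by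
    intro v
    rw [norm_smul, mul_comm]
    have htail : 0 ≤ (1 + ‖v‖) ^ (-((finrank ℝ E : ℝ) + 1)) := by positivity
    rcases le_or_gt ‖v‖ (max R 0) with hle | hgt
    · nlinarith [norm_nonneg (φ v)]
    · have hR : R ≤ ‖v‖ := (le_max_left _ _).trans hgt.le
      calc ‖v‖ * ‖φ v‖ ≤ ‖v‖ * exp (-((finrank ℝ E + 2) * ‖v‖)) :=
            mul_le_mul_of_nonneg_left (hdecay v hR) (norm_nonneg v)
        _ ≤ (1 + ‖v‖) ^ (-((finrank ℝ E : ℝ) + 1)) :=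
            mul_exp_neg_le_one_add_rpow (norm_nonneg v) _
        _ ≤ _ := by nlinarith [norm_nonneg (φ v), le_max_right R 0]
  exact ((hφ.norm.const_mul _).add (integrable_one_add_norm (by linarith))).mono'
    (hφ.aestronglyMeasurable.smul aestronglyMeasurable_id) (ae_of_all _ hdom)

theorem integral_smul_self_mem_of_reflection_invariant (K : Submodule ℝ E) {f : E → ℝ}
    (hf : ∀ v, f (K.reflection v) = f v) : ∫ v, f v • v ∈ K := by
  rw [← K.reflection_eq_self_iff]
  calc K.reflection (∫ v, f v • v) = ∫ v, K.reflection (f v • v) :=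
        (K.reflection.toLinearIsometry.integral_comp_comm _).symm
    _ = ∫ v, f (K.reflection v) • K.reflection v := by simp only [map_smul, hf]
    _ = ∫ v, f v • v :=
        K.reflection.measurePreserving.integral_comp' (f := K.reflection.toMeasurableEquiv)
          (fun v => f v • v)

theorem integral_mul_inner_pos_of_strictMono {u : E} (hu : u ≠ 0) {ρ : E → ℝ} {g : ℝ → ℝ}
    (hg : StrictMono g) (hρ : ∀ v, 0 < ρ v) (hρS : ∀ v, ρ ((ℝ ∙ u)ᗮ.reflection v) = ρ v)
    (hint : Integrable (fun v => ρ v * g ⟪v, u⟫ * ⟪v, u⟫)) :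
    0 < ∫ v, ρ v * g ⟪v, u⟫ * ⟪v, u⟫ := by
  set S := (ℝ ∙ u)ᗮ.reflection
  set F := fun v => ρ v * g ⟪v, u⟫ * ⟪v, u⟫
  have hSu : ∀ v, ⟪S v, u⟫ = -⟪v, u⟫ := fun v => by
    have hS : S u = -u := Submodule.reflection_orthogonalComplement_singleton_eq_neg u
    rw [← S.inner_map_map v u, hS, inner_neg_right, neg_neg]
  have hsym : ∀ v, F v + F (S v) = ρ v * ((g ⟪v, u⟫ - g (-⟪v, u⟫)) * ⟪v, u⟫) := fun v => by
    simp only [F, hSu, hρS]; ring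
  have hsym_nonneg : ∀ v, 0 ≤ F v + F (S v) := fun v => by
    rw [hsym]
    rcases eq_or_ne ⟪v, u⟫ 0 with h | h
    · simp [h]
    · exact (mul_pos (hρ v) (hg.sub_neg_mul_pos h)).le
  have hsupp : {v | ⟪v, u⟫ ≠ 0} ⊆ Function.support fun v => F v + F (S v) := fun v hv => by
    rw [Function.mem_support, hsym]
    exact (mul_pos (hρ v) (hg.sub_neg_mul_pos hv)).ne'
  have hopen : IsOpen {v : E | ⟪v, u⟫ ≠ 0} := isOpen_ne_fun (by fun_prop) continuous_const
  have hintS : Integrable (fun v => F (S v)) :=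
    (S.measurePreserving.integrable_comp_emb S.toMeasurableEquiv.measurableEmbedding).mpr hint
  have hpos : 0 < ∫ v, F v + F (S v) := by
    rw [integral_pos_iff_support_of_nonneg hsym_nonneg (hint.add hintS)]
    exact (hopen.measure_pos _ ⟨u, by simpa using hu⟩).trans_le (measure_mono hsupp)
  have hS : ∫ v, F (S v) = ∫ v, F v :=
    S.measurePreserving.integral_comp' (f := S.toMeasurableEquiv) F
  rw [integral_add hint hintS, hS] at hpos
  linarith

end Symmetry

section Gibbs

variable {E : Type*} [NormedAddCommGroup E]

/-- `exp (-Φ_u(v) / σ)`, i.e. `Z(σ,u) M_u(v)`. -/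
noncomputable def gibbsWeight (V : ℝ → ℝ) (σ : ℝ) (u v : E) : ℝ :=
  exp (-((‖v - u‖ ^ 2 / 2 + V ‖v‖) / σ))

theorem gibbsWeight_pos (V : ℝ → ℝ) (σ : ℝ) (u v : E) : 0 < gibbsWeight V σ u v :=
  exp_pos _

theorem exists_gibbsWeight_le_exp {V : ℝ → ℝ}
    (hcoerc : Tendsto (fun r : ℝ => (r ^ 2 / 2 + V r) / r) atTop atTop) {σ : ℝ} (hσ : 0 < σ)
    (u : E) (a : ℝ) : ∃ R, ∀ v : E, R ≤ ‖v‖ → gibbsWeight V σ u v ≤ exp (-(a * ‖v‖)) := by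
  obtain ⟨R₀, hR₀⟩ := eventually_atTop.mp (hcoerc.eventually_ge_atTop (‖u‖ + σ * a))
  refine ⟨max R₀ 1, fun v hv => exp_le_exp.mpr ?_⟩
  have hr : 1 ≤ ‖v‖ := le_of_max_le_right hv
  have hgrowth := hR₀ ‖v‖ (le_of_max_le_left hv)
  rw [le_div_iff₀ (by linarith)] at hgrowth
  have hsq : (‖v‖ - ‖u‖) ^ 2 ≤ ‖v - u‖ ^ 2 :=
    sq_le_sq.mpr ((abs_norm_sub_norm_le v u).trans (abs_norm _).ge)
  rw [neg_le_neg_iff, le_div_iff₀ hσ]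
  nlinarith [norm_nonneg u]

variable [InnerProductSpace ℝ E]

theorem gibbsWeight_linearIsometryEquiv (V : ℝ → ℝ) (σ : ℝ) {u : E} {L : E ≃ₗᵢ[ℝ] E}
    (hL : L u = u) (v : E) : gibbsWeight V σ u (L v) = gibbsWeight V σ u v := by
  have hdist : ‖L v - u‖ = ‖v - u‖ := by rw [← L.norm_map (v - u), map_sub, hL]
  rw [gibbsWeight, gibbsWeight, hdist, L.norm_map]

theorem gibbsWeight_eq_mul_exp_inner (V : ℝ → ℝ) (σ : ℝ) (u v : E) :
    gibbsWeight V σ u v = exp (-((‖v‖ ^ 2 / 2 + ‖u‖ ^ 2 / 2 + V ‖v‖) / σ)) * exp (⟪v, u⟫ / σ) := by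
  rw [gibbsWeight, ← exp_add, norm_sub_sq_real]
  congr 1
  ring

end Gibbs

section GibbsMoment

variable {E : Type*} [NormedAddCommGroup E] [InnerProductSpace ℝ E] [FiniteDimensional ℝ E]
  [MeasurableSpace E] [BorelSpace E] {V : ℝ → ℝ} {σ : ℝ} {u : E}

theorem integrable_gibbsWeight_smul_self
    (hcoerc : Tendsto (fun r : ℝ => (r ^ 2 / 2 + V r) / r) atTop atTop) (hσ : 0 < σ)
    (hweight : Integrable (gibbsWeight V σ u)) :
    Integrable fun v => gibbsWeight V σ u v • v := by
  obtain ⟨R, hdecay⟩ := exists_gibbsWeight_le_exp hcoerc hσ u (Module.finrank ℝ E + 2)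
  refine integrable_smul_self_of_le_exp hweight (R := R) fun v hv => ?_
  rw [Real.norm_of_nonneg (gibbsWeight_pos V σ u v).le]
  exact hdecay v hv

theorem integral_gibbsWeight_mul_inner_pos (hσ : 0 < σ) (hu : u ≠ 0)
    (hint : Integrable fun v => gibbsWeight V σ u v * ⟪v, u⟫) :
    0 < ∫ v, gibbsWeight V σ u v * ⟪v, u⟫ := by
  simp_rw [gibbsWeight_eq_mul_exp_inner] at hint ⊢
  exact integral_mul_inner_pos_of_strictMono hu (g := fun t => exp (t / σ))
    (fun a b hab => exp_lt_exp.mpr (div_lt_div_of_pos_right hab hσ)) (fun v => exp_pos _)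
    (fun v => by simp only [LinearIsometryEquiv.norm_map]) hint

end GibbsMoment

theorem stmt4_general {d : ℕ} (V : ℝ → ℝ)
    (hcoerc : Tendsto (fun r : ℝ => (r ^ 2 / 2 + V r) / r) atTop atTop)
    (σ : ℝ) (hσ : 0 < σ) (u : EuclideanSpace ℝ (Fin d))
    (Z : ℝ) (hZ : Z = ∫ v : EuclideanSpace ℝ (Fin d),
      Real.exp (-((‖v - u‖ ^ 2 / 2 + V ‖v‖) / σ)))
    (hZpos : 0 < Z)
    (M : EuclideanSpace ℝ (Fin d) → ℝ)
    (hM : M = fun v => Z⁻¹ * Real.exp (-((‖v - u‖ ^ 2 / 2 + V ‖v‖) / σ))) :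
    (∃ c : ℝ, 0 ≤ c ∧ (∫ v, M v • v) = c • u) ∧
      (u ≠ 0 → 0 < ∫ v, M v * ⟪v, u⟫) := by
  change Z = ∫ v, gibbsWeight V σ u v at hZ
  change M = fun v => Z⁻¹ * gibbsWeight V σ u v at hM
  subst hM
  have hweight : Integrable (gibbsWeight V σ u) := .of_integral_ne_zero (hZ ▸ hZpos.ne')
  have hmoment := integrable_gibbsWeight_smul_self hcoerc hσ hweight
  have hint : Integrable fun v => gibbsWeight V σ u v * ⟪v, u⟫ := by
    simpa only [real_inner_smul_left] using hmoment.inner_const (𝕜 := ℝ) u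
  have hmem := integral_smul_self_mem_of_reflection_invariant (ℝ ∙ u)
    (f := fun v => Z⁻¹ * gibbsWeight V σ u v) fun v => by
      rw [gibbsWeight_linearIsometryEquiv V σ
        ((ℝ ∙ u).reflection_mem_subspace_eq_self (Submodule.mem_span_singleton_self u))]
  have hJ : ∫ v, Z⁻¹ * gibbsWeight V σ u v * ⟪v, u⟫ =
      ⟪u, ∫ v, (Z⁻¹ * gibbsWeight V σ u v) • v⟫ := by
    rw [← integral_inner ((hmoment.smul Z⁻¹).congr (ae_of_all _ fun v => by simp [mul_smul]))]
    simp_rw [real_inner_smul_right, real_inner_comm u]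
  have hpos : u ≠ 0 → 0 < ∫ v, Z⁻¹ * gibbsWeight V σ u v * ⟪v, u⟫ := fun hu => by
    simp_rw [mul_assoc, integral_const_mul]
    exact mul_pos (inv_pos.mpr hZpos) (integral_gibbsWeight_mul_inner_pos hσ hu hint)
  -- for `u = 0` the junk value `x / 0 = 0` makes `c = 0`
  refine ⟨⟨(∫ v, Z⁻¹ * gibbsWeight V σ u v * ⟪v, u⟫) / ‖u‖ ^ 2, ?_, ?_⟩, hpos⟩
  · rcases eq_or_ne u 0 with rfl | hu
    · simp
    · exact div_nonneg (hpos hu).le (by positivity)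
  · have hproj := (ℝ ∙ u).starProjection_eq_self_iff.mpr hmem
    rw [Submodule.starProjection_singleton] at hproj
    rw [hJ]
    simpa using hproj.symm

/-- The mean velocity of the von Mises-Fisher type distribution
`M_u(v) = Z(σ,u)⁻¹ exp(−Φ_u(v)/σ)` is a nonnegative multiple of `u`, and when
`u ≠ 0` the scalar `∫ M_u(v) (v·u) dv` is strictly positive. -/
theorem stmt4 {d : ℕ} (hd : 1 ≤ d) (V : ℝ → ℝ) (hVmeas : Measurable V)
    (hcoerc : Tendsto (fun r : ℝ => (r ^ 2 / 2 + V r) / r) atTop atTop)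
    (σ : ℝ) (hσ : 0 < σ) (u : EuclideanSpace ℝ (Fin d))
    (Z : ℝ) (hZ : Z = ∫ v : EuclideanSpace ℝ (Fin d),
      Real.exp (-((‖v - u‖ ^ 2 / 2 + V ‖v‖) / σ)))
    (hZpos : 0 < Z)
    (M : EuclideanSpace ℝ (Fin d) → ℝ)
    (hM : M = fun v => Z⁻¹ * Real.exp (-((‖v - u‖ ^ 2 / 2 + V ‖v‖) / σ))) :
    (∃ c : ℝ, 0 ≤ c ∧ (∫ v, M v • v) = c • u) ∧
      (u ≠ 0 → 0 < ∫ v, M v * ⟪v, u⟫) :=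
  stmt4_general V hcoerc σ hσ u Z hZ hZpos M hM
end

section
/- Under the hypotheses that V ∈ C², v ↦ |v|²/2 + V(|v|) is strictly convex and coercive, and V′ < 0 on ]0,r₀[, V′ > 0 on ]r₀,∞[: for 0 < |u| < r₀ the unique minimizer v̄ of Φ_u satisfies (v̄ − u)·(u/|u|) = −V′(|v̄|) > 0, and for |u| > r₀ it satisfies (v̄ − u)·(u/|u|) = −V′(|v̄|) < 0. -/
open Real Filter Set
open scoped RealInnerProductSpace

/-!
Testing the minimality of `v̄` against points `t • (u / |u|)` of the ray through `u` gives both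
`|v̄ - u| = ||v̄| - |u||`, so that `v̄` lies on that ray, and the fact that `|v̄|` minimizes the
one-dimensional profile `t ↦ (t - |u|)² / 2 + V t` over `t ≥ 0`. The profile decreases near `0`
because `V' < 0` there, so its minimum is interior and Fermat's rule gives `|v̄| + V'(|v̄|) = |u|`.
Since `V'(r₀) = 0` by continuity, this forces `|v̄|` onto the same side of `r₀` as `|u|`.
-/

/-- `radialProfile V ‖u‖ t = Φ_u (t • (u / ‖u‖))` for `t ≥ 0`. -/
noncomputable def radialProfile (V : ℝ → ℝ) (a t : ℝ) : ℝ := (t - a) ^ 2 / 2 + V t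

theorem hasDerivAt_radialProfile {V : ℝ → ℝ} {a t : ℝ} (hV : DifferentiableAt ℝ V t) :
    HasDerivAt (radialProfile V a) (t - a + deriv V t) t := by
  have hsq : HasDerivAt (fun t : ℝ => (t - a) ^ 2 / 2) (t - a) t := by
    simpa using (((hasDerivAt_id t).sub_const a).pow 2).div_const 2
  exact hsq.add hV.hasDerivAt

theorem pos_of_isMinOn_radialProfile {V : ℝ → ℝ} (hV : Differentiable ℝ V) {a r₀ s : ℝ}
    (ha : 0 < a) (hr₀ : 0 < r₀) (hneg : ∀ r, 0 < r → r < r₀ → deriv V r < 0)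
    (hs : 0 ≤ s) (hmin : IsMinOn (radialProfile V a) (Ici 0) s) : 0 < s := by
  refine hs.lt_of_ne fun hs₀ => ?_
  subst hs₀
  set m := min a r₀
  have hm : 0 < m := lt_min ha hr₀
  have hanti : StrictAntiOn (radialProfile V a) (Icc 0 m) := by
    refine strictAntiOn_of_deriv_neg (convex_Icc 0 m)
      (fun t _ => (hasDerivAt_radialProfile (hV t)).continuousAt.continuousWithinAt) ?_
    rw [interior_Icc]
    rintro t ⟨ht₀, htm⟩
    rw [(hasDerivAt_radialProfile (hV t)).deriv]
    linarith [hneg t ht₀ (htm.trans_le (min_le_right a r₀)), htm.trans_le (min_le_left a r₀)]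
  exact (hanti ⟨le_rfl, hm.le⟩ ⟨hm.le, le_rfl⟩ hm).not_ge (hmin hm.le)

theorem add_deriv_eq_of_isMinOn_radialProfile {V : ℝ → ℝ} {a s : ℝ}
    (hV : DifferentiableAt ℝ V s) (hs : 0 < s) (hmin : IsMinOn (radialProfile V a) (Ici 0) s) :
    s + deriv V s = a := by
  have := (hmin.isLocalMin (Ici_mem_nhds hs)).hasDerivAt_eq_zero (hasDerivAt_radialProfile hV)
  linarith

theorem nonneg_of_le_of_forall_lt_pos {f : ℝ → ℝ} {r₀ r : ℝ} (hf : ContinuousAt f r₀)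
    (hpos : ∀ r, r₀ < r → 0 < f r) (hr : r₀ ≤ r) : 0 ≤ f r := by
  rcases hr.lt_or_eq with hr | rfl
  · exact (hpos r hr).le
  · refine ge_of_tendsto (hf.tendsto.mono_left (nhdsWithin_le_nhds (s := Ioi r₀))) ?_
    filter_upwards [self_mem_nhdsWithin] with r' hr'
    exact (hpos r' hr').le

theorem nonpos_of_le_of_forall_lt_neg {f : ℝ → ℝ} {r₀ r : ℝ} (hf : ContinuousAt f r₀)
    (hneg : ∀ r, 0 < r → r < r₀ → f r < 0) (hr_pos : 0 < r) (hr : r ≤ r₀) : f r ≤ 0 := by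
  rcases hr.lt_or_eq with hr | rfl
  · exact (hneg r hr_pos hr).le
  · refine le_of_tendsto (hf.tendsto.mono_left (nhdsWithin_le_nhds (s := Iio r))) ?_
    filter_upwards [Ioo_mem_nhdsLT hr_pos] with r' hr'
    exact (hneg r' hr'.1 hr'.2).le

section InnerProductSpace

variable {E : Type*} [NormedAddCommGroup E] [InnerProductSpace ℝ E]

theorem norm_smul_normalize {u : E} (hu : u ≠ 0) (t : ℝ) : ‖t • (‖u‖⁻¹ • u)‖ = |t| := by
  rw [norm_smul, norm_smul, norm_inv, norm_norm, inv_mul_cancel₀ (norm_ne_zero_iff.2 hu),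
    mul_one, Real.norm_eq_abs]

theorem norm_smul_normalize_sub {u : E} (hu : u ≠ 0) (t : ℝ) :
    ‖t • (‖u‖⁻¹ • u) - u‖ = |t - ‖u‖| := by
  rw [← norm_smul_normalize hu, sub_smul, smul_inv_smul₀ (norm_ne_zero_iff.2 hu)]

theorem inner_sub_normalize_of_norm_sub_sq {u v : E} (hu : u ≠ 0)
    (h : ‖v - u‖ ^ 2 = (‖v‖ - ‖u‖) ^ 2) : ⟪v - u, ‖u‖⁻¹ • u⟫ = ‖v‖ - ‖u‖ := by
  have hu' : ‖u‖ ≠ 0 := norm_ne_zero_iff.2 hu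
  have hvu : ⟪v, u⟫ = ‖v‖ * ‖u‖ := by nlinarith [norm_sub_sq_real v u]
  rw [real_inner_smul_right, inner_sub_left, hvu, real_inner_self_eq_norm_sq]
  field_simp

variable {V : ℝ → ℝ} {u vb : E}

theorem isMinOn_radialProfile_of_forall_le (hu : u ≠ 0)
    (hmin : ∀ v, ‖vb - u‖ ^ 2 / 2 + V ‖vb‖ ≤ ‖v - u‖ ^ 2 / 2 + V ‖v‖) :
    ‖vb - u‖ ^ 2 = (‖vb‖ - ‖u‖) ^ 2 ∧ IsMinOn (radialProfile V ‖u‖) (Ici 0) ‖vb‖ := by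
  have hray : ∀ t, 0 ≤ t → ‖vb - u‖ ^ 2 / 2 + V ‖vb‖ ≤ radialProfile V ‖u‖ t := fun t ht => by
    simpa [radialProfile, norm_smul_normalize_sub hu, norm_smul_normalize hu, abs_of_nonneg ht,
      sq_abs] using hmin (t • (‖u‖⁻¹ • u))
  have htri : (‖vb‖ - ‖u‖) ^ 2 ≤ ‖vb - u‖ ^ 2 := by
    rw [← sq_abs]
    exact pow_le_pow_left₀ (abs_nonneg _) (abs_norm_sub_norm_le vb u) 2
  have heq : ‖vb - u‖ ^ 2 = (‖vb‖ - ‖u‖) ^ 2 := by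
    have := hray ‖vb‖ (norm_nonneg vb)
    rw [radialProfile] at this
    linarith
  exact ⟨heq, fun t ht => by simpa only [mem_ofPred_eq, radialProfile, heq] using hray t ht⟩

theorem minimizer_first_order_conditions (hV : Differentiable ℝ V) {r₀ : ℝ} (hr₀ : 0 < r₀)
    (hneg : ∀ r, 0 < r → r < r₀ → deriv V r < 0) (hu : 0 < ‖u‖)
    (hmin : ∀ v, ‖vb - u‖ ^ 2 / 2 + V ‖vb‖ ≤ ‖v - u‖ ^ 2 / 2 + V ‖v‖) :
    0 < ‖vb‖ ∧ ‖vb‖ + deriv V ‖vb‖ = ‖u‖ ∧ ⟪vb - u, ‖u‖⁻¹ • u⟫ = -deriv V ‖vb‖ := by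
  have hu₀ : u ≠ 0 := norm_pos_iff.1 hu
  obtain ⟨hnorm, hprofile⟩ := isMinOn_radialProfile_of_forall_le hu₀ hmin
  have hvb := pos_of_isMinOn_radialProfile hV hu hr₀ hneg (norm_nonneg vb) hprofile
  have hfoc := add_deriv_eq_of_isMinOn_radialProfile (hV _) hvb hprofile
  refine ⟨hvb, hfoc, ?_⟩
  rw [inner_sub_normalize_of_norm_sub_sq hu₀ hnorm]
  linarith

end InnerProductSpace

theorem stmt10_general {d : ℕ} (V : ℝ → ℝ) (hV : ContDiff ℝ 2 V)
    (r₀ : ℝ) (hr₀ : 0 < r₀)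
    (hneg : ∀ r, 0 < r → r < r₀ → deriv V r < 0)
    (hpos : ∀ r, r₀ < r → 0 < deriv V r)
    (u vb : EuclideanSpace ℝ (Fin d))
    (hmin : ∀ v, ‖vb - u‖ ^ 2 / 2 + V ‖vb‖ ≤ ‖v - u‖ ^ 2 / 2 + V ‖v‖) :
    (0 < ‖u‖ → ‖u‖ < r₀ →
      ⟪vb - u, ‖u‖⁻¹ • u⟫ = -deriv V ‖vb‖ ∧ 0 < -deriv V ‖vb‖) ∧
    (r₀ < ‖u‖ →
      ⟪vb - u, ‖u‖⁻¹ • u⟫ = -deriv V ‖vb‖ ∧ -deriv V ‖vb‖ < 0) := by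
  have hVd : Differentiable ℝ V := hV.differentiable (by norm_num)
  have hV'c : ContinuousAt (deriv V) r₀ := (hV.continuous_deriv (by norm_num)).continuousAt
  refine ⟨fun hu hur₀ => ?_, fun hur₀ => ?_⟩
  · obtain ⟨hvb, hfoc, hinner⟩ := minimizer_first_order_conditions hVd hr₀ hneg hu hmin
    refine ⟨hinner, neg_pos.2 (hneg _ hvb (lt_of_not_ge fun hle => ?_))⟩
    linarith [nonneg_of_le_of_forall_lt_pos hV'c hpos hle]
  · obtain ⟨hvb, hfoc, hinner⟩ :=
      minimizer_first_order_conditions hVd hr₀ hneg (hr₀.trans hur₀) hmin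
    refine ⟨hinner, neg_neg_iff_pos.2 (hpos _ (lt_of_not_ge fun hle => ?_))⟩
    linarith [nonpos_of_le_of_forall_lt_neg hV'c hneg hvb hle]

/-- For `0 < |u| < r₀` the unique minimizer `v̄` of `Φ_u` satisfies
`(v̄ − u)·(u/|u|) = −V′(|v̄|) > 0`, and for `|u| > r₀` it satisfies
`(v̄ − u)·(u/|u|) = −V′(|v̄|) < 0`. -/
theorem stmt10 {d : ℕ} (hd : 1 ≤ d) (V : ℝ → ℝ) (hV : ContDiff ℝ 2 V)
    (hconv : StrictConvexOn ℝ Set.univ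
      (fun v : EuclideanSpace ℝ (Fin d) => ‖v‖ ^ 2 / 2 + V ‖v‖))
    (hcoerc : Tendsto (fun r : ℝ => (r ^ 2 / 2 + V r) / r) atTop atTop)
    (r₀ : ℝ) (hr₀ : 0 < r₀)
    (hneg : ∀ r, 0 < r → r < r₀ → deriv V r < 0)
    (hpos : ∀ r, r₀ < r → 0 < deriv V r)
    (u vb : EuclideanSpace ℝ (Fin d))
    (hmin : ∀ v, ‖vb - u‖ ^ 2 / 2 + V ‖vb‖ ≤ ‖v - u‖ ^ 2 / 2 + V ‖v‖) :
    (0 < ‖u‖ → ‖u‖ < r₀ →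
      ⟪vb - u, ‖u‖⁻¹ • u⟫ = -deriv V ‖vb‖ ∧ 0 < -deriv V ‖vb‖) ∧
    (r₀ < ‖u‖ →
      ⟪vb - u, ‖u‖⁻¹ • u⟫ = -deriv V ‖vb‖ ∧ -deriv V ‖vb‖ < 0) :=
  stmt10_general V hV r₀ hr₀ hneg hpos u vb hmin
end
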